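/- arXiv:1708.08290 — 6 statements merged into one kernel-verified Lean document; each statement's English description precedes it below -/
import Mathlib

section
/- Let f(X) ∈ ℤ[X] be a polynomial of degree n ≥ 1 with positive leading coefficient. There exist infinitely many primes p with the following property: there exists an infinite strictly increasing sequence of positive integers x_1 < x_2 < ... and a constant c > 0 depending only on f and p such that f(x_k) ≠ 0 and [f(x_k)]_{{p}} ≥ c·|f(x_k)|^{1/n} for all sufficiently large k. -/
/-!
An irreducible factor `g` of `f` is separable over `ℚ`, so `g` and `g'` have a nonzero resultant.
By Schur's theorem `g` has a root modulo infinitely many primes `p`, and for all but the finitely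
many `p` dividing the resultant this root is simple, so Hensel's lemma lifts it to a root
`z ∈ ℤ_p` of `f`. Taking `x_k ∈ [p^k, 2p^k)` congruent to `z` modulo `p^k` gives
`p^k ∣ f(x_k)`, while `|f(x_k)| = O(x_k^n) = O(p^{kn})`.
-/

open Polynomial Filter
open scoped Nat

namespace Polynomial

theorem exists_natAbs_eval_ne (P : ℤ[X]) (hP : 0 < P.natDegree) (m : ℕ) :
    ∃ t : ℤ, (P.eval t).natAbs ≠ m := by
  have hne : ∀ c : ℤ, P - C c ≠ 0 := fun c h => by
    rw [sub_eq_zero] at h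
    simp [h] at hP
  obtain ⟨t, ht⟩ := Infinite.exists_notMem_finset
    ((P - C (m : ℤ)).roots + (P - C (-m : ℤ)).roots).toFinset
  refine ⟨t, fun h => ht ?_⟩
  simp only [Multiset.mem_toFinset, Multiset.mem_add, mem_roots (hne _), IsRoot, eval_sub,
    eval_C]
  omega

theorem exists_prime_gt_dvd_eval (g : ℤ[X]) (hg : 0 < g.natDegree) (N : ℕ) :
    ∃ p, N < p ∧ p.Prime ∧ ∃ a : ℤ, (p : ℤ) ∣ g.eval a := by
  by_cases hc : g.eval 0 = 0
  · obtain ⟨p, hNp, hp⟩ := Nat.exists_infinite_primes (N + 1)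
    exact ⟨p, hNp, hp, 0, by simp [hc]⟩
  set c := g.eval 0
  set F : ℤ := ↑(N !)
  have hcF : c * F ≠ 0 := mul_ne_zero hc (by positivity)
  obtain ⟨t, ht⟩ := exists_natAbs_eval_ne (g.comp (C (c * F) * X))
    (by rwa [natDegree_comp, natDegree_C_mul_X _ hcF, mul_one]) c.natAbs
  rw [eval_comp, eval_mul, eval_C, eval_X] at ht
  -- `g (c F t) ≡ g 0 = c` modulo `c F t`, so `g (c F t) = c w` with `w ≡ 1 (mod F)`
  obtain ⟨s, hs⟩ : c * F * t ∣ g.eval (c * F * t) - c := by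
    simpa using sub_dvd_eval_sub (c * F * t) 0 g
  set w := 1 + F * (t * s)
  have hgw : g.eval (c * F * t) = c * w := by linear_combination hs
  have hw : w.natAbs ≠ 1 := fun h => ht (by rw [hgw, Int.natAbs_mul, h, mul_one])
  obtain ⟨q, hq, hqw⟩ := Int.exists_prime_and_dvd hw
  refine ⟨q.natAbs, ?_, Int.prime_iff_natAbs_prime.1 hq, c * F * t, ?_⟩
  · by_contra! hle
    have hqF : q ∣ F := Int.natAbs_dvd.1 (Int.natCast_dvd_natCast.2
      (Nat.dvd_factorial (Int.natAbs_pos.2 hq.ne_zero) hle))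
    exact hq.not_dvd_one ((dvd_add_left (hqF.mul_right _)).1 hqw)
  · rw [hgw, Int.natCast_natAbs, abs_dvd]
    exact hqw.mul_left c

theorem infinite_setOf_prime_dvd_eval (g : ℤ[X]) (hg : 0 < g.natDegree) :
    {p : ℕ | p.Prime ∧ ∃ a : ℤ, (p : ℤ) ∣ g.eval a}.Infinite :=
  Set.infinite_of_forall_exists_gt fun N => by
    obtain ⟨p, hNp, hp⟩ := exists_prime_gt_dvd_eval g hg N
    exact ⟨p, hp, hNp⟩

theorem exists_dvd_natDegree_pos_separable_map (f : ℤ[X]) (hf : 0 < f.natDegree) :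
    ∃ g : ℤ[X], g ∣ f ∧ 0 < g.natDegree ∧ (g.map (Int.castRingHom ℚ)).Separable := by
  obtain ⟨g, hirr, hdvd⟩ := exists_irreducible_of_natDegree_pos (f.natDegree_primPart ▸ hf)
  have hprim : g.IsPrimitive := isPrimitive_of_dvd f.isPrimitive_primPart hdvd
  have hdeg : 0 < g.natDegree := by
    by_contra! h
    rw [Nat.le_zero, natDegree_eq_zero] at h
    obtain ⟨a, rfl⟩ := h
    exact hirr.not_isUnit (isUnit_C.2 (hprim a dvd_rfl))
  exact ⟨g, hdvd.trans f.primPart_dvd, hdeg,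
    ((IsPrimitive.Int.irreducible_iff_irreducible_map_cast hprim).1 hirr).separable⟩

theorem resultant_derivative_ne_zero (g : ℤ[X])
    (hsep : (g.map (Int.castRingHom ℚ)).Separable) : g.resultant g.derivative ≠ 0 := by
  have hinj : Function.Injective (Int.castRingHom ℚ) := Int.cast_injective
  have hmap : (g.map (Int.castRingHom ℚ)).resultant (g.map (Int.castRingHom ℚ)).derivative =
      g.resultant g.derivative := by
    rw [derivative_map, natDegree_map_eq_of_injective hinj,
      natDegree_map_eq_of_injective hinj, resultant_map_map]
    rfl
  intro h0
  rw [h0, Int.cast_zero, resultant_eq_zero_iff] at hmap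
  exact hmap.2 hsep

theorem dvd_resultant_derivative {R : Type*} [CommRing R] (g : R[X]) (hg : g.natDegree ≠ 0)
    {a r : R} (h : r ∣ g.eval a) (h' : r ∣ g.derivative.eval a) :
    r ∣ g.resultant g.derivative := by
  obtain ⟨u, v, -, -, huv⟩ :=
    exists_mul_add_mul_eq_C_resultant g g.derivative le_rfl le_rfl (.inl hg)
  have := congrArg (eval a) huv
  rw [eval_add, eval_mul, eval_mul, eval_C] at this
  exact this ▸ dvd_add (h.mul_right _) (h'.mul_right _)

theorem finite_setOf_prime_dvd_eval_and_derivative (g : ℤ[X]) (hg : 0 < g.natDegree)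
    (hsep : (g.map (Int.castRingHom ℚ)).Separable) :
    {p : ℕ | ∃ a : ℤ, (p : ℤ) ∣ g.eval a ∧ (p : ℤ) ∣ g.derivative.eval a}.Finite := by
  refine (Nat.divisors (g.resultant g.derivative).natAbs).finite_toSet.subset ?_
  rintro p ⟨a, h, h'⟩
  rw [Finset.mem_coe, Nat.mem_divisors, ← Int.natCast_dvd]
  exact ⟨dvd_resultant_derivative g hg.ne' h h',
    Int.natAbs_ne_zero.2 (resultant_derivative_ne_zero g hsep)⟩

theorem eventually_eval_natCast_ne_zero {f : ℤ[X]} (hf : f ≠ 0) :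
    ∀ᶠ y : ℕ in atTop, f.eval (y : ℤ) ≠ 0 := by
  rw [← Nat.cofinite_eq_atTop]
  exact Nat.cast_injective.tendsto_cofinite.eventually (eventually_cofinite_not_isRoot hf)

theorem exists_pos_eventually_abs_eval_natCast_le (f : ℤ[X]) :
    ∃ C > 0, ∀ᶠ y : ℕ in atTop, |((f.eval (y : ℤ) : ℤ) : ℝ)| ≤ C * y ^ f.natDegree := by
  have hdeg : (f.map (Int.castRingHom ℝ)).degree ≤ (X ^ f.natDegree : ℝ[X]).degree := by
    rw [degree_X_pow]
    exact degree_map_le.trans degree_le_natDegree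
  obtain ⟨C, hC, hO⟩ := (isBigO_atTop_of_degree_le _ _ hdeg).exists_pos
  refine ⟨C, hC, (tendsto_natCast_atTop_atTop.eventually hO.bound).mono fun y hy => ?_⟩
  simpa [eval_natCast_map] using hy

end Polynomial

theorem strictMono_of_pow_le_of_lt_two_mul_pow {p : ℕ} (hp : 2 ≤ p) {x : ℕ → ℕ}
    (hlo : ∀ k, p ^ k ≤ x k) (hhi : ∀ k, x k < 2 * p ^ k) : StrictMono x :=
  strictMono_nat_of_lt_succ fun k => calc
    x k < 2 * p ^ k := hhi k
    _ ≤ p * p ^ k := Nat.mul_le_mul_right _ hp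
    _ = p ^ (k + 1) := (pow_succ' p k).symm
    _ ≤ x (k + 1) := hlo (k + 1)

theorem Real.rpow_one_div_le_of_le_mul_pow {a C b : ℝ} {n : ℕ} (hn : n ≠ 0) (ha : 0 ≤ a)
    (hC : 0 ≤ C) (hb : 0 ≤ b) (h : a ≤ C * b ^ n) : a ^ (1 / (n : ℝ)) ≤ C ^ (1 / (n : ℝ)) * b :=
  calc a ^ (1 / (n : ℝ)) ≤ (C * b ^ n) ^ (1 / (n : ℝ)) := by gcongr
    _ = C ^ (1 / (n : ℝ)) * b := by
      rw [Real.mul_rpow hC (by positivity), one_div, Real.pow_rpow_inv_natCast hb hn]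

theorem Nat.Prime.pow_le_ordProj_natAbs {p k : ℕ} {m : ℤ} (hp : p.Prime) (hm : m ≠ 0)
    (h : (p : ℤ) ^ k ∣ m) : p ^ k ≤ ordProj[p] m.natAbs := by
  refine Nat.le_of_dvd (Nat.ordProj_pos _ _)
    ((hp.pow_dvd_iff_dvd_ordProj (Int.natAbs_ne_zero.2 hm)).1 ?_)
  simpa [Int.natAbs_pow] using Int.natAbs_dvd_natAbs.2 h

namespace PadicInt

variable {p : ℕ} [Fact p.Prime]

theorem exists_aeval_eq_zero_of_dvd_eval (g : ℤ[X]) {a : ℤ} (h : (p : ℤ) ∣ g.eval a)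
    (h' : ¬ (p : ℤ) ∣ g.derivative.eval a) : ∃ z : ℤ_[p], aeval z g = 0 := by
  have hval : ∀ P : ℤ[X], aeval (a : ℤ_[p]) P = ((P.eval a : ℤ) : ℤ_[p]) := fun P => by
    simp [aeval_def, eval₂_eq_eval_map]
  have hunit : ‖((g.derivative.eval a : ℤ) : ℤ_[p])‖ = 1 :=
    (norm_le_one _).antisymm (not_lt.1 fun h1 => h' ((norm_int_lt_one_iff_dvd _).1 h1))
  obtain ⟨z, hz, -⟩ := hensels_lemma (F := g) (a := (a : ℤ_[p])) (by
    rw [hval, hval, hunit, one_pow]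
    exact (norm_int_lt_one_iff_dvd _).2 h)
  exact ⟨z, hz⟩

theorem pow_dvd_eval_of_intCast_eq_toZModPow {f : ℤ[X]} {z : ℤ_[p]} (hz : aeval z f = 0)
    {k : ℕ} {x : ℤ} (hx : (x : ZMod (p ^ k)) = toZModPow k z) : (p : ℤ) ^ k ∣ f.eval x := by
  have : ((f.eval x : ℤ) : ZMod (p ^ k)) = 0 := by
    have := congrArg (toZModPow k) hz
    rwa [map_zero, aeval_def, hom_eval₂, ← hx,
      RingHom.ext_int ((toZModPow k).comp _) (Int.castRingHom _), eval₂_at_intCast] at this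
  exact_mod_cast (ZMod.intCast_zmod_eq_zero_iff_dvd _ _).1 this

theorem exists_strictMono_large_ordProj_of_aeval_eq_zero {f : ℤ[X]} (hf : 0 < f.natDegree)
    {z : ℤ_[p]} (hz : aeval z f = 0) :
    ∃ x : ℕ → ℕ, StrictMono x ∧ (∀ k, 0 < x k) ∧
      ∃ c : ℝ, 0 < c ∧ ∃ K : ℕ, ∀ k ≥ K,
        f.eval (x k : ℤ) ≠ 0 ∧
        c * |(Int.cast (f.eval (x k : ℤ)) : ℝ)| ^ (1 / (f.natDegree : ℝ)) ≤
          ((p ^ ((f.eval (x k : ℤ)).natAbs.factorization p) : ℕ) : ℝ) := by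
  have hp : p.Prime := Fact.out
  set n := f.natDegree
  set x : ℕ → ℕ := fun k => (toZModPow k z).val + p ^ k
  have hlo : ∀ k, p ^ k ≤ x k := fun k => Nat.le_add_left _ _
  have hhi : ∀ k, x k < 2 * p ^ k := fun k => by
    simp only [x, two_mul, Nat.add_lt_add_iff_right, ZMod.val_lt]
  have hdvd : ∀ k, (p : ℤ) ^ k ∣ f.eval (x k : ℤ) := fun k =>
    pow_dvd_eval_of_intCast_eq_toZModPow hz (by
      rw [Int.cast_natCast, Nat.cast_add, ZMod.natCast_self, add_zero, ZMod.natCast_zmod_val])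
  have hmono : StrictMono x := strictMono_of_pow_le_of_lt_two_mul_pow hp.two_le hlo hhi
  obtain ⟨C, hC, hbound⟩ := exists_pos_eventually_abs_eval_natCast_le f
  obtain ⟨K, hK⟩ := eventually_atTop.1 <| hmono.tendsto_atTop.eventually
    ((eventually_eval_natCast_ne_zero (ne_zero_of_natDegree_gt hf)).and hbound)
  refine ⟨x, hmono, fun k => (pow_pos hp.pos k).trans_le (hlo k), (2 * C ^ (1 / (n : ℝ)))⁻¹,
    by positivity, K, fun k hk => ⟨(hK k hk).1, ?_⟩⟩
  calc (2 * C ^ (1 / (n : ℝ)))⁻¹ * |((f.eval (x k : ℤ) : ℤ) : ℝ)| ^ (1 / (n : ℝ))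
      ≤ (2 * C ^ (1 / (n : ℝ)))⁻¹ * (C ^ (1 / (n : ℝ)) * (2 * p ^ k)) := by
        gcongr
        refine Real.rpow_one_div_le_of_le_mul_pow hf.ne' (abs_nonneg _) hC.le (by positivity)
          ((hK k hk).2.trans ?_)
        gcongr
        exact_mod_cast (hhi k).le
    _ = p ^ k := by field_simp
    _ ≤ _ := by exact_mod_cast hp.pow_le_ordProj_natAbs (hK k hk).1 (hdvd k)

end PadicInt

theorem infinitely_many_primes_with_large_p_part_general (f : Polynomial ℤ)
    (hdeg : 1 ≤ f.natDegree) :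
    {p : ℕ | p.Prime ∧ ∃ x : ℕ → ℕ, StrictMono x ∧ (∀ k, 0 < x k) ∧
      ∃ c : ℝ, 0 < c ∧ ∃ K : ℕ, ∀ k ≥ K,
        f.eval (x k : ℤ) ≠ 0 ∧
        c * |(Int.cast (f.eval (x k : ℤ)) : ℝ)| ^ (1 / (f.natDegree : ℝ)) ≤
          ((p ^ ((f.eval (x k : ℤ)).natAbs.factorization p) : ℕ) : ℝ)}.Infinite := by
  obtain ⟨g, hgf, hg, hsep⟩ := exists_dvd_natDegree_pos_separable_map f hdeg
  refine ((infinite_setOf_prime_dvd_eval g hg).sdiff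
    (finite_setOf_prime_dvd_eval_and_derivative g hg hsep)).mono ?_
  rintro p ⟨⟨hp, a, ha⟩, hsimple⟩
  have : Fact p.Prime := ⟨hp⟩
  obtain ⟨z, hz⟩ :=
    PadicInt.exists_aeval_eq_zero_of_dvd_eval g ha fun ha' => hsimple ⟨a, ha, ha'⟩
  exact ⟨hp, PadicInt.exists_strictMono_large_ordProj_of_aeval_eq_zero hdeg
    (aeval_eq_zero_of_dvd_aeval_eq_zero hgf hz)⟩

/-- for `f ∈ ℤ[X]` of degree `n ≥ 1` with positive leading coefficient there
are infinitely many primes `p` admitting a strictly increasing sequence of positive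
integers `x₁ < x₂ < ⋯` and a constant `c > 0` with `f(x_k) ≠ 0` and
`[f(x_k)]_{{p}} ≥ c·|f(x_k)|^{1/n}` for all sufficiently large `k`. -/
theorem infinitely_many_primes_with_large_p_part (f : Polynomial ℤ)
    (hdeg : 1 ≤ f.natDegree) (hlc : 0 < f.leadingCoeff) :
    {p : ℕ | p.Prime ∧ ∃ x : ℕ → ℕ, StrictMono x ∧ (∀ k, 0 < x k) ∧
      ∃ c : ℝ, 0 < c ∧ ∃ K : ℕ, ∀ k ≥ K,
        f.eval (x k : ℤ) ≠ 0 ∧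
        c * |(Int.cast (f.eval (x k : ℤ)) : ℝ)| ^ (1 / (f.natDegree : ℝ)) ≤
          ((p ^ ((f.eval (x k : ℤ)).natAbs.factorization p) : ℕ) : ℝ)}.Infinite :=
  infinitely_many_primes_with_large_p_part_general f hdeg
end

section
/- Let Λ ⊆ ℤ² be a primitive lattice (i.e., Λ contains a point with coprime coordinates) of determinant d, and for a positive integer h let Λ_h := Λ ∩ hℤ². Then Λ_h is a lattice with determinant d·h²/gcd(h,d), and the shortest nonzero vector of Λ_h has Euclidean length at least h. -/
/-!
After a unimodular change of coordinates sending a primitive vector of `Λ` to `(1, 0)`, the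
lattice becomes `ℤ × dℤ`, while `hℤ²` is preserved by every automorphism of `ℤ²`. Hence
`Λ ∩ hℤ² ≅ hℤ × lcm(d, h)ℤ`, of index `h · lcm(d, h) = d h² / gcd(h, d)`. Every nonzero
vector of `hℤ²` is `h` times a nonzero integer vector, so its squared length is at least `h²`.
-/

open AddSubgroup

/-- The automorphism of `R²` with matrix `[[a, -w], [b, u]]`, of determinant `u a + w b = 1`. -/
def unimodularEquiv {R : Type*} [CommRing R] (a b u w : R) (huw : u * a + w * b = 1) :
    (R × R) ≃+ (R × R) where
  toFun p := (p.1 * a - p.2 * w, p.1 * b + p.2 * u)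
  invFun p := (u * p.1 + w * p.2, -b * p.1 + a * p.2)
  left_inv := by
    rintro ⟨x, y⟩
    ext
    · linear_combination x * huw
    · linear_combination y * huw
  right_inv := by
    rintro ⟨x, y⟩
    ext
    · linear_combination x * huw
    · linear_combination y * huw
  map_add' := by
    rintro ⟨x, y⟩ ⟨x', y'⟩
    ext <;> simp only [Prod.mk_add_mk] <;> ring

@[simp]
theorem unimodularEquiv_one_zero {R : Type*} [CommRing R] (a b u w : R)
    (huw : u * a + w * b = 1) : unimodularEquiv a b u w huw (1, 0) = (a, b) := by
  simp [unimodularEquiv]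

theorem AddSubgroup.prod_inf_prod {G H : Type*} [AddGroup G] [AddGroup H]
    (G₁ G₂ : AddSubgroup G) (H₁ H₂ : AddSubgroup H) :
    G₁.prod H₁ ⊓ G₂.prod H₂ = (G₁ ⊓ G₂).prod (H₁ ⊓ H₂) := by
  ext
  simp only [mem_inf, mem_prod]
  tauto

theorem AddSubgroup.index_inf_eq_index_comap_inf {G : Type*} [AddGroup G] (e : G ≃+ G)
    (Λ H : AddSubgroup G) (hH : H.comap e.toAddMonoidHom = H) :
    (Λ ⊓ H).index = (Λ.comap e.toAddMonoidHom ⊓ H).index := by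
  rw [← index_comap_of_surjective _ (f := e.toAddMonoidHom) e.surjective, comap_inf, hH]

theorem mem_prod_zmultiples_iff {n : ℤ} {v : ℤ × ℤ} :
    v ∈ (zmultiples n).prod (zmultiples n) ↔ ∃ w : ℤ × ℤ, n • w = v := by
  simp only [mem_prod, Int.mem_zmultiples_iff]
  constructor
  · rintro ⟨⟨a, ha⟩, ⟨b, hb⟩⟩
    exact ⟨(a, b), by ext <;> simp [ha, hb]⟩
  · rintro ⟨w, rfl⟩
    simp

theorem map_mem_prod_zmultiples (f : ℤ × ℤ →+ ℤ × ℤ) {n : ℤ} {v : ℤ × ℤ}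
    (hv : v ∈ (zmultiples n).prod (zmultiples n)) :
    f v ∈ (zmultiples n).prod (zmultiples n) := by
  obtain ⟨w, rfl⟩ := mem_prod_zmultiples_iff.mp hv
  exact mem_prod_zmultiples_iff.mpr ⟨f w, (map_zsmul f n w).symm⟩

theorem comap_prod_zmultiples (e : (ℤ × ℤ) ≃+ (ℤ × ℤ)) (n : ℤ) :
    ((zmultiples n).prod (zmultiples n)).comap e.toAddMonoidHom =
      (zmultiples n).prod (zmultiples n) :=
  le_antisymm (fun v hv => by simpa using map_mem_prod_zmultiples e.symm.toAddMonoidHom hv)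
    (fun _ hv => map_mem_prod_zmultiples e.toAddMonoidHom hv)

theorem eq_top_prod_zmultiples_index_of_mem (Λ : AddSubgroup (ℤ × ℤ))
    (h10 : ((1 : ℤ), (0 : ℤ)) ∈ Λ) :
    Λ = (⊤ : AddSubgroup ℤ).prod (zmultiples (Λ.index : ℤ)) := by
  obtain ⟨a, ha⟩ := Int.subgroup_cyclic (Λ.map (AddMonoidHom.snd ℤ ℤ))
  rw [← zmultiples_eq_closure] at ha
  have hΛ : Λ = (⊤ : AddSubgroup ℤ).prod (zmultiples a) := by
    ext ⟨x, y⟩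
    simp only [mem_prod, mem_top, true_and, ← ha, mem_map]
    refine ⟨fun hxy => ⟨(x, y), hxy, rfl⟩, ?_⟩
    rintro ⟨⟨x', y'⟩, hmem, rfl⟩
    -- `(x, y') = (x - x') • (1, 0) + (x', y')`
    simpa using add_mem (zsmul_mem h10 (x - x')) hmem
  rw [hΛ, index_prod, index_top, one_mul, Int.index_zmultiples, Int.zmultiples_natAbs]

theorem one_le_sq_add_sq {w : ℤ × ℤ} (hw : w ≠ 0) : 1 ≤ w.1 ^ 2 + w.2 ^ 2 := by
  have : w.1 ≠ 0 ∨ w.2 ≠ 0 := by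
    by_contra! h
    exact hw (Prod.ext h.1 h.2)
  rcases this with h | h
  · linarith [sq_nonneg w.2, sq_pos_of_ne_zero h]
  · linarith [sq_nonneg w.1, sq_pos_of_ne_zero h]

theorem sq_le_sq_add_sq_of_mem_prod_zmultiples {n : ℤ} {v : ℤ × ℤ}
    (hv : v ∈ (zmultiples n).prod (zmultiples n)) (hne : v ≠ 0) :
    n ^ 2 ≤ v.1 ^ 2 + v.2 ^ 2 := by
  obtain ⟨w, rfl⟩ := mem_prod_zmultiples_iff.mp hv
  have hw : w ≠ 0 := by
    rintro rfl
    exact hne (smul_zero n)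
  calc n ^ 2 = n ^ 2 * 1 := (mul_one _).symm
    _ ≤ n ^ 2 * (w.1 ^ 2 + w.2 ^ 2) := by gcongr; exact one_le_sq_add_sq hw
    _ = (n • w).1 ^ 2 + (n • w).2 ^ 2 := by
      simp only [Prod.smul_fst, Prod.smul_snd, smul_eq_mul]
      ring

theorem Nat.mul_lcm_eq_mul_sq_div_gcd (d h : ℕ) : h * Nat.lcm d h = d * h ^ 2 / Nat.gcd h d := by
  rw [Nat.lcm, Nat.gcd_comm,
    ← Nat.mul_div_assoc _ (dvd_mul_of_dvd_left (Nat.gcd_dvd_right h d) h)]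
  congr 1
  ring

theorem primitive_lattice_inter_scaled_general (Λ : AddSubgroup (ℤ × ℤ)) (d : ℕ)
    (hd : Λ.index = d)
    (hprim : ∃ v ∈ Λ, IsCoprime v.1 v.2) (h : ℕ) :
    (Λ ⊓ (AddSubgroup.zmultiples (h : ℤ)).prod (AddSubgroup.zmultiples (h : ℤ))).index =
        d * h ^ 2 / Nat.gcd h d ∧
      ∀ v ∈ Λ ⊓ (AddSubgroup.zmultiples (h : ℤ)).prod (AddSubgroup.zmultiples (h : ℤ)),
        v ≠ 0 → (h : ℤ) ^ 2 ≤ v.1 ^ 2 + v.2 ^ 2 := by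
  refine ⟨?_, fun v hv hne => sq_le_sq_add_sq_of_mem_prod_zmultiples (mem_inf.mp hv).2 hne⟩
  obtain ⟨v, hvΛ, u, w, huw⟩ := hprim
  set e := unimodularEquiv v.1 v.2 u w huw
  have hΛ : Λ.comap e.toAddMonoidHom = (⊤ : AddSubgroup ℤ).prod (zmultiples (d : ℤ)) := by
    rw [← hd, ← index_comap_of_surjective _ (f := e.toAddMonoidHom) e.surjective]
    exact eq_top_prod_zmultiples_index_of_mem _ (by simpa [e] using hvΛ)
  rw [index_inf_eq_index_comap_inf e _ _ (comap_prod_zmultiples e h), hΛ, prod_inf_prod,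
    top_inf_eq, Int.zmultiples_inf, index_prod, Int.index_zmultiples, Int.index_zmultiples]
  simpa using Nat.mul_lcm_eq_mul_sq_div_gcd d h

/-- for a primitive lattice `Λ ⊆ ℤ²` of determinant (index) `d` and a
positive integer `h`, the lattice `Λ_h = Λ ∩ hℤ²` has determinant `d·h²/gcd(h,d)` and its
shortest nonzero vector has Euclidean length at least `h`. -/
theorem primitive_lattice_inter_scaled (Λ : AddSubgroup (ℤ × ℤ)) (d : ℕ)
    (hd : Λ.index = d) (hd0 : 0 < d)
    (hprim : ∃ v ∈ Λ, IsCoprime v.1 v.2) (h : ℕ) (hh : 0 < h) :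
    (Λ ⊓ (AddSubgroup.zmultiples (h : ℤ)).prod (AddSubgroup.zmultiples (h : ℤ))).index =
        d * h ^ 2 / Nat.gcd h d ∧
      ∀ v ∈ Λ ⊓ (AddSubgroup.zmultiples (h : ℤ)).prod (AddSubgroup.zmultiples (h : ℤ)),
        v ≠ 0 → (h : ℤ) ^ 2 ≤ v.1 ^ 2 + v.2 ^ 2 :=
  primitive_lattice_inter_scaled_general Λ d hd hprim h
end

section
/- Let d be a positive integer. Then the sum over all positive integers h of μ(h)·gcd(d,h)/h² equals (6/π²)·∏_{p | d} (1 + p^{-1})^{-1}, where μ is the Möbius function and the product is over primes p dividing d. -/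
/-!
The summand `μ(h) gcd(d, h) / h²` is multiplicative in `h` and vanishes off the squarefree
numbers, so the series is the Euler product `∏_p (1 - gcd(d, p) / p²)`. Each factor equals
`(1 - p⁻²)` times `(1 + p⁻¹)⁻¹` if `p ∣ d` and `1` otherwise, and `∏_p (1 - p⁻²) = 1 / ζ(2) = 6 / π²`.
-/

open ArithmeticFunction Real

theorem hasProd_one_add_of_squarefree_support {R : Type*} [NormedCommRing R] [CompleteSpace R]
    {f : ℕ → R} (hf₁ : f 1 = 1) (hmul : ∀ {m n}, m.Coprime n → f (m * n) = f m * f n)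
    (hsum : Summable (‖f ·‖)) (hsq : ∀ n, ¬ Squarefree n → f n = 0) :
    HasProd (fun p : Nat.Primes => 1 + f p) (∑' n, f n) := by
  have hlocal (p : Nat.Primes) : ∑' e, f ((p : ℕ) ^ e) = 1 + f p := by
    rw [tsum_eq_sum (s := {0, 1}), Finset.sum_pair zero_ne_one, pow_zero, pow_one, hf₁]
    intro e he
    simp only [Finset.mem_insert, Finset.mem_singleton, not_or] at he
    refine hsq _ fun h => he.2 ?_
    exact ((Nat.squarefree_pow_iff p.prop.ne_one he.1).mp h).2
  simpa only [hlocal] using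
    EulerProduct.eulerProduct_hasProd hf₁ hmul hsum (hsq 0 not_squarefree_zero)

theorem hasProd_primes_ite_dvd {M : Type*} [CommMonoid M] [TopologicalSpace M] {d : ℕ}
    (hd : d ≠ 0) (g : ℕ → M) :
    HasProd (fun p : Nat.Primes => if (p : ℕ) ∣ d then g p else 1)
      (∏ p ∈ d.primeFactors, g p) := by
  classical
  have hprod : ∏ p ∈ d.primeFactors.subtype Nat.Prime, (if (p : ℕ) ∣ d then g p else 1)
      = ∏ p ∈ d.primeFactors, g p := by
    rw [Finset.prod_subtype_of_mem (fun p => if p ∣ d then g p else 1)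
      fun p hp => Nat.prime_of_mem_primeFactors hp]
    exact Finset.prod_congr rfl fun p hp => if_pos (Nat.dvd_of_mem_primeFactors hp)
  rw [← hprod]
  refine hasProd_prod_of_ne_finset_one fun p hp => if_neg fun hpd => hp ?_
  exact Finset.mem_subtype.mpr (Nat.mem_primeFactors.mpr ⟨p.prop, hpd, hd⟩)

noncomputable def invSqHom : ℕ →*₀ ℝ where
  toFun n := ((n : ℝ) ^ 2)⁻¹
  map_zero' := by simp
  map_one' := by simp
  map_mul' m n := by push_cast; rw [mul_pow, mul_inv]

theorem invSqHom_apply (n : ℕ) : invSqHom n = ((n : ℝ) ^ 2)⁻¹ := rfl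

theorem hasProd_one_sub_inv_sq_primes :
    HasProd (fun p : Nat.Primes => 1 - ((p : ℝ) ^ 2)⁻¹) (6 / π ^ 2) := by
  have hsum : HasSum invSqHom (π ^ 2 / 6) := by
    convert hasSum_zeta_two using 2 with n
    rw [invSqHom_apply, one_div]
  have hEuler := EulerProduct.eulerProduct_completely_multiplicative_hasProd
    (f := invSqHom) hsum.summable.abs
  rw [hsum.tsum_eq] at hEuler
  simpa only [inv_inv, inv_div, invSqHom_apply] using hEuler.inv₀ (by positivity)

noncomputable def moebiusGcdTerm (d h : ℕ) : ℝ := moebius h * Nat.gcd d h / (h : ℝ) ^ 2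

section moebiusGcdTerm

variable {d : ℕ}

theorem moebiusGcdTerm_one : moebiusGcdTerm d 1 = 1 := by simp [moebiusGcdTerm]

theorem moebiusGcdTerm_mul_of_coprime {m n : ℕ} (hmn : m.Coprime n) :
    moebiusGcdTerm d (m * n) = moebiusGcdTerm d m * moebiusGcdTerm d n := by
  simp only [moebiusGcdTerm]
  rw [isMultiplicative_moebius.map_mul_of_coprime hmn, Nat.Coprime.gcd_mul _ hmn]
  push_cast
  ring

theorem moebiusGcdTerm_of_not_squarefree {n : ℕ} (hn : ¬ Squarefree n) :
    moebiusGcdTerm d n = 0 := by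
  simp [moebiusGcdTerm, moebius_eq_zero_of_not_squarefree hn]

theorem moebiusGcdTerm_prime {p : ℕ} (hp : p.Prime) :
    moebiusGcdTerm d p = -(Nat.gcd d p / (p : ℝ) ^ 2) := by
  simp [moebiusGcdTerm, moebius_apply_prime hp, neg_div]

theorem norm_moebiusGcdTerm_le (hd : 0 < d) (n : ℕ) :
    ‖moebiusGcdTerm d n‖ ≤ d * ((n : ℝ) ^ 2)⁻¹ := by
  have hμ : |(moebius n : ℝ)| ≤ 1 := by exact_mod_cast abs_moebius_le_one
  have hgcd : (Nat.gcd d n : ℝ) ≤ d := by exact_mod_cast Nat.le_of_dvd hd (Nat.gcd_dvd_left d n)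
  rw [moebiusGcdTerm, div_eq_mul_inv, norm_mul, norm_mul, Real.norm_natCast,
    Real.norm_of_nonneg (by positivity : (0 : ℝ) ≤ ((n : ℝ) ^ 2)⁻¹)]
  gcongr
  calc ‖(moebius n : ℝ)‖ * Nat.gcd d n ≤ 1 * d := by gcongr; exact hμ
    _ = d := one_mul _

theorem summable_norm_moebiusGcdTerm (hd : 0 < d) : Summable (‖moebiusGcdTerm d ·‖) :=
  .of_nonneg_of_le (fun _ => norm_nonneg _) (norm_moebiusGcdTerm_le hd) <|
    (Real.summable_nat_pow_inv.mpr one_lt_two).mul_left _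

end moebiusGcdTerm

theorem one_sub_gcd_div_sq_eq {p : ℕ} (hp : p.Prime) (d : ℕ) :
    1 - Nat.gcd d p / (p : ℝ) ^ 2
      = (1 - ((p : ℝ) ^ 2)⁻¹) * if p ∣ d then (1 + (p : ℝ)⁻¹)⁻¹ else 1 := by
  split_ifs with hpd
  · rw [Nat.gcd_eq_right hpd]
    have : (1 : ℝ) + (p : ℝ)⁻¹ ≠ 0 := by positivity
    field_simp
    ring
  · rw [Nat.Coprime.gcd_eq_one ((hp.coprime_iff_not_dvd.mpr hpd).symm)]
    simp [div_eq_mul_inv]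

/-- `∑_{h ≥ 1} μ(h)·gcd(d,h)/h² = (6/π²)·∏_{p ∣ d} (1 + p⁻¹)⁻¹`. -/
theorem moebius_gcd_series (d : ℕ) (hd : 0 < d) :
    ∑' h : ℕ, ((ArithmeticFunction.moebius h : ℝ) * (Nat.gcd d h : ℝ) / (h : ℝ) ^ 2) =
      6 / Real.pi ^ 2 * ∏ p ∈ d.primeFactors, (1 + (p : ℝ)⁻¹)⁻¹ := by
  have hEuler := hasProd_one_add_of_squarefree_support moebiusGcdTerm_one
    moebiusGcdTerm_mul_of_coprime (summable_norm_moebiusGcdTerm hd)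
    (fun _ => moebiusGcdTerm_of_not_squarefree)
  have hprod : HasProd (fun p : Nat.Primes => 1 + moebiusGcdTerm d p)
      (6 / π ^ 2 * ∏ p ∈ d.primeFactors, (1 + (p : ℝ)⁻¹)⁻¹) := by
    convert hasProd_one_sub_inv_sq_primes.mul (hasProd_primes_ite_dvd hd.ne' _) using 1
    funext p
    rw [moebiusGcdTerm_prime p.prop, ← sub_eq_add_neg, one_sub_gcd_div_sq_eq p.prop]
  exact hEuler.unique hprod
end

section
/- With the same notation: if M_1 and M_2 are distinct minimal D-critical subsets of L (i.e., q_D(M_i) = q_0 is maximal and no proper nonempty subset of M_i attains q_0), then M_1 ∩ M_2 = ∅. -/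
/-!
If two maximal-ratio sets `M₁`, `M₂` meet, then modularity of the weight and submodularity of the
rank give `w(M₁ ∩ M₂) ≥ q₀ (r(M₁) + r(M₂) - r(M₁ ∪ M₂)) ≥ q₀ r(M₁ ∩ M₂)`, so the intersection
attains `q₀` as well. Minimality of `M₁` and of `M₂` then forces `M₁ = M₁ ∩ M₂ = M₂`.
-/

open Finset

section Ratio

variable {α : Type*} (e : α → ℕ) (r : Finset α → ℕ)

/-- The paper's `q_D(M)`. -/
def weightRankRatio (M : Finset α) : ℚ :=
  ((∑ a ∈ M, e a : ℕ) : ℚ) / (r M : ℚ)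

variable {e r}

theorem weightRankRatio_le_iff {M : Finset α} {q : ℚ} (hr : 0 < r M) :
    weightRankRatio e r M ≤ q ↔ ((∑ a ∈ M, e a : ℕ) : ℚ) ≤ q * r M :=
  div_le_iff₀ (by exact_mod_cast hr)

theorem weightRankRatio_eq_iff {M : Finset α} {q : ℚ} (hr : 0 < r M) :
    weightRankRatio e r M = q ↔ ((∑ a ∈ M, e a : ℕ) : ℚ) = q * r M :=
  div_eq_iff (by exact_mod_cast hr.ne')

theorem weightRankRatio_nonneg (M : Finset α) : 0 ≤ weightRankRatio e r M :=
  div_nonneg (Nat.cast_nonneg _) (Nat.cast_nonneg _)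

theorem weightRankRatio_inter_eq [DecidableEq α] {L M₁ M₂ : Finset α} {q : ℚ}
    (hrpos : ∀ M : Finset α, M ⊆ L → M.Nonempty → 0 < r M)
    (hmax : ∀ M : Finset α, M ⊆ L → M.Nonempty → weightRankRatio e r M ≤ q)
    (hsub : r (M₁ ∩ M₂) + r (M₁ ∪ M₂) ≤ r M₁ + r M₂)
    (h₁ : M₁ ⊆ L) (h₂ : M₂ ⊆ L) (hI : (M₁ ∩ M₂).Nonempty)
    (hq₁ : weightRankRatio e r M₁ = q) (hq₂ : weightRankRatio e r M₂ = q) :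
    weightRankRatio e r (M₁ ∩ M₂) = q := by
  have hIL : M₁ ∩ M₂ ⊆ L := inter_subset_left.trans h₁
  have hUL : M₁ ∪ M₂ ⊆ L := union_subset h₁ h₂
  have hUn : (M₁ ∪ M₂).Nonempty := hI.mono (inter_subset_left.trans subset_union_left)
  have hw₁ := (weightRankRatio_eq_iff (hrpos M₁ h₁ (hI.mono inter_subset_left))).1 hq₁
  have hw₂ := (weightRankRatio_eq_iff (hrpos M₂ h₂ (hI.mono inter_subset_right))).1 hq₂
  have hwU := (weightRankRatio_le_iff (hrpos _ hUL hUn)).1 (hmax _ hUL hUn)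
  have hwI := (weightRankRatio_le_iff (hrpos _ hIL hI)).1 (hmax _ hIL hI)
  have hmod : ((∑ a ∈ M₁ ∪ M₂, e a : ℕ) : ℚ) + ((∑ a ∈ M₁ ∩ M₂, e a : ℕ) : ℚ)
      = ((∑ a ∈ M₁, e a : ℕ) : ℚ) + ((∑ a ∈ M₂, e a : ℕ) : ℚ) := by
    exact_mod_cast sum_union_inter
  have hsubQ : q * r (M₁ ∩ M₂) + q * r (M₁ ∪ M₂) ≤ q * r M₁ + q * r M₂ := by
    rw [← mul_add, ← mul_add]
    exact mul_le_mul_of_nonneg_left (by exact_mod_cast hsub) (hq₁ ▸ weightRankRatio_nonneg M₁)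
  rw [weightRankRatio_eq_iff (hrpos _ hIL hI)]
  linarith

end Ratio

theorem minimal_critical_disjoint_general {α : Type*} [DecidableEq α] (L : Finset α) (e : α → ℕ)
    (r : Finset α → ℕ)
    (hrsub : ∀ N₁ N₂ : Finset α, N₁ ⊆ L → N₂ ⊆ L →
      r (N₁ ∩ N₂) + r (N₁ ∪ N₂) ≤ r N₁ + r N₂)
    (hrpos : ∀ M : Finset α, M ⊆ L → M.Nonempty → 1 ≤ r M)
    (q₀ : ℚ)
    (hq₀ : ∀ M : Finset α, M ⊆ L → M.Nonempty →
      ((∑ a ∈ M, e a : ℕ) : ℚ) / (r M : ℚ) ≤ q₀)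
    (M₁ M₂ : Finset α) (h₁ : M₁ ⊆ L) (h₂ : M₂ ⊆ L)
    (hq₁ : ((∑ a ∈ M₁, e a : ℕ) : ℚ) / (r M₁ : ℚ) = q₀)
    (hq₂ : ((∑ a ∈ M₂, e a : ℕ) : ℚ) / (r M₂ : ℚ) = q₀)
    (hmin₁ : ∀ M' : Finset α, M' ⊂ M₁ → M'.Nonempty →
      ((∑ a ∈ M', e a : ℕ) : ℚ) / (r M' : ℚ) ≠ q₀)
    (hmin₂ : ∀ M' : Finset α, M' ⊂ M₂ → M'.Nonempty →
      ((∑ a ∈ M', e a : ℕ) : ℚ) / (r M' : ℚ) ≠ q₀)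
    (hne : M₁ ≠ M₂) :
    M₁ ∩ M₂ = ∅ := by
  by_contra hI
  have hIn : (M₁ ∩ M₂).Nonempty := nonempty_iff_ne_empty.2 hI
  have hcrit : weightRankRatio e r (M₁ ∩ M₂) = q₀ :=
    weightRankRatio_inter_eq hrpos hq₀ (hrsub M₁ M₂ h₁ h₂) h₁ h₂ hIn hq₁ hq₂
  have hI₁ : M₁ ∩ M₂ = M₁ := by
    by_contra h
    exact hmin₁ _ (inter_subset_left.ssubset_of_ne h) hIn hcrit
  have hI₂ : M₁ ∩ M₂ = M₂ := by
    by_contra h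
    exact hmin₂ _ (inter_subset_right.ssubset_of_ne h) hIn hcrit
  exact hne (hI₁.symm.trans hI₂)

/-- distinct minimal `D`-critical subsets are disjoint. -/
theorem minimal_critical_disjoint {α : Type*} [DecidableEq α] (L : Finset α) (e : α → ℕ)
    (he : ∀ a ∈ L, 1 ≤ e a) (r : Finset α → ℕ) (hr0 : r ∅ = 0)
    (hrsub : ∀ N₁ N₂ : Finset α, N₁ ⊆ L → N₂ ⊆ L →
      r (N₁ ∩ N₂) + r (N₁ ∪ N₂) ≤ r N₁ + r N₂)
    (hrpos : ∀ M : Finset α, M ⊆ L → M.Nonempty → 1 ≤ r M)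
    (q₀ : ℚ)
    (hq₀ : ∀ M : Finset α, M ⊆ L → M.Nonempty →
      ((∑ a ∈ M, e a : ℕ) : ℚ) / (r M : ℚ) ≤ q₀)
    (M₁ M₂ : Finset α) (h₁ : M₁ ⊆ L) (h₂ : M₂ ⊆ L)
    (h₁n : M₁.Nonempty) (h₂n : M₂.Nonempty)
    (hq₁ : ((∑ a ∈ M₁, e a : ℕ) : ℚ) / (r M₁ : ℚ) = q₀)
    (hq₂ : ((∑ a ∈ M₂, e a : ℕ) : ℚ) / (r M₂ : ℚ) = q₀)
    (hmin₁ : ∀ M' : Finset α, M' ⊂ M₁ → M'.Nonempty →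
      ((∑ a ∈ M', e a : ℕ) : ℚ) / (r M' : ℚ) ≠ q₀)
    (hmin₂ : ∀ M' : Finset α, M' ⊂ M₂ → M'.Nonempty →
      ((∑ a ∈ M', e a : ℕ) : ℚ) / (r M' : ℚ) ≠ q₀)
    (hne : M₁ ≠ M₂) :
    M₁ ∩ M₂ = ∅ :=
  minimal_critical_disjoint_general L e r hrsub hrpos q₀ hq₀ M₁ M₂ h₁ h₂ hq₁ hq₂ hmin₁ hmin₂ hne
end

section
/- Let p be a prime, m a positive integer, ℓ_1,...,ℓ_m linearly independent real linear forms in m variables, and ℓ_{1,p},...,ℓ_{m',p} (m' ≤ m) linearly independent linear forms in m variables with coefficients in ℚ_p. Then there exist constants γ_1, γ_2 > 1, depending only on p, m and the forms, such that for all positive reals A_1,...,A_m, B_1,...,B_{m'} with A_1···A_m·B_1···B_{m'} ≥ γ_1 and B_i ≤ γ_2^{-1} for all i, there is a nonzero x ∈ ℤ^m with |ℓ_i(x)| ≤ A_i for i = 1,...,m and |ℓ_{i,p}(x)|_p ≤ B_i for i = 1,...,m'. -/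
/-!
The `p`-adic conditions `‖ℓ_{i,p}(x)‖ ≤ B_i` cut out subgroups `Λ_i` of `ℤ^m`: after rescaling
`ℓ_{i,p}` to have `ℤ_p`-coefficients, `Λ_i` contains the kernel of a map to `ℤ/p^k`, so its index
is at most `c_i / B_i`. Their intersection `Λ` is a sublattice of `ℝ^m` of covolume
`[ℤ^m : Λ] ≤ ∏ c_i / ∏ B_i`, while the archimedean conditions define a convex symmetric body of
volume `2^m ∏ A_i / |det ℓ|`. Once `∏ A_i ∏ B_i > |det ℓ| ∏ c_i`, Minkowski's convex body theorem
gives a nonzero point of `Λ` in the body.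
-/

open MeasureTheory Module ZLattice

section IntLattice

variable {ι : Type*}

def intCastPi (ι : Type*) : (ι → ℤ) →ₗ[ℤ] ι → ℝ :=
  ((Int.castAddHom ℝ).compLeft ι).toIntLinearMap

@[simp]
theorem intCastPi_apply (x : ι → ℤ) : intCastPi ι x = fun i => (x i : ℝ) := rfl

theorem intCastPi_injective : Function.Injective (intCastPi ι) := fun x y h =>
  funext fun i => by simpa using congrFun h i

variable [Fintype ι]

theorem span_range_basisFun_eq_map_intCastPi :
    Submodule.span ℤ (Set.range (Pi.basisFun ℝ ι)) =
      (⊤ : Submodule ℤ (ι → ℤ)).map (intCastPi ι) := by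
  ext y
  simp only [Basis.mem_span_iff_repr_mem, Pi.basisFun_repr, Submodule.map_top,
    LinearMap.mem_range]
  constructor
  · intro hy
    choose x hx using hy
    exact ⟨x, funext fun i => by simpa using hx i⟩
  · rintro ⟨x, rfl⟩ i
    exact ⟨x i, by simp⟩

def AddSubgroup.realLattice (Λ : AddSubgroup (ι → ℤ)) : Submodule ℤ (ι → ℝ) :=
  (AddSubgroup.toIntSubmodule Λ).map (intCastPi ι)

namespace AddSubgroup

variable (Λ : AddSubgroup (ι → ℤ))

theorem realLattice_le_span_range_basisFun :
    Λ.realLattice ≤ Submodule.span ℤ (Set.range (Pi.basisFun ℝ ι)) :=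
  span_range_basisFun_eq_map_intCastPi (ι := ι) ▸ Submodule.map_mono le_top

instance : DiscreteTopology Λ.realLattice :=
  DiscreteTopology.of_subset ZSpan.discreteTopology_pi_basisFun
    Λ.realLattice_le_span_range_basisFun

instance [Λ.FiniteIndex] : IsZLattice ℝ Λ.realLattice := by
  refine ⟨eq_top_iff.2 ?_⟩
  rw [← ZSpan.span_top (Pi.basisFun ℝ ι)]
  refine Submodule.span_le.2 fun y hy => ?_
  change y ∈ Submodule.span ℤ _ at hy
  rw [span_range_basisFun_eq_map_intCastPi] at hy
  obtain ⟨x, -, rfl⟩ := hy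
  -- `index • x ∈ Λ` for every `x`, and `x` is a real multiple of it
  have hN : (Λ.index : ℝ) ≠ 0 := Nat.cast_ne_zero.2 FiniteIndex.index_ne_zero
  have hmem : intCastPi ι (Λ.index • x) ∈ Submodule.span ℝ (Λ.realLattice : Set (ι → ℝ)) :=
    Submodule.subset_span ⟨_, Λ.nsmul_index_mem x, rfl⟩
  rw [map_nsmul, ← Nat.cast_smul_eq_nsmul ℝ] at hmem
  simpa [hN] using Submodule.smul_mem _ (Λ.index : ℝ)⁻¹ hmem

theorem covolume_realLattice [Λ.FiniteIndex] : covolume Λ.realLattice = Λ.index := by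
  have hcov₀ : covolume (Submodule.span ℤ (Set.range (Pi.basisFun ℝ ι))) = 1 := by
    rw [covolume_eq_measure_fundamentalDomain _ volume (ZSpan.isAddFundamentalDomain _ volume),
      ZSpan.fundamentalDomain_pi_basisFun, measureReal_def, Real.volume_pi_Ico]
    simp
  have := covolume_div_covolume_eq_relIndex _ _ Λ.realLattice_le_span_range_basisFun
  rw [hcov₀, div_one] at this
  rw [this, span_range_basisFun_eq_map_intCastPi, realLattice, Submodule.map_toAddSubgroup,
    Submodule.map_toAddSubgroup,
    relIndex_map_map_of_injective (f := (intCastPi ι : (ι → ℤ) →+ ι → ℝ)) _ _ intCastPi_injective]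
  simp

theorem exists_ne_zero_mem_of_index_mul_two_pow_lt_volume [Λ.FiniteIndex] {s : Set (ι → ℝ)}
    (h_symm : ∀ x ∈ s, -x ∈ s) (h_conv : Convex ℝ s)
    (h : Λ.index * 2 ^ Fintype.card ι < volume s) :
    ∃ x ∈ Λ, x ≠ 0 ∧ (fun i => (x i : ℝ)) ∈ s := by
  have hF : IsAddFundamentalDomain Λ.realLattice.toAddSubgroup _ volume :=
    ZLattice.isAddFundamentalDomain (Free.chooseBasis ℤ Λ.realLattice) volume
  have : Countable Λ.realLattice.toAddSubgroup := inferInstanceAs (Countable Λ.realLattice)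
  obtain ⟨⟨_, x, hxΛ, rfl⟩, hx0, hxs⟩ :=
    exists_ne_zero_mem_lattice_of_measure_mul_two_pow_lt_measure hF h_symm h_conv (by
      rw [← ENNReal.ofReal_toReal (ZSpan.fundamentalDomain_isBounded _).measure_lt_top.ne,
        ← measureReal_def, ← covolume_eq_measure_fundamentalDomain _ volume hF,
        covolume_realLattice, finrank_fintype_fun_eq_card]
      simpa using h)
  exact ⟨x, hxΛ, by rintro rfl; exact hx0 (Subtype.ext (map_zero _)), hxs⟩

end AddSubgroup

end IntLattice

theorem LinearIndependent.injective_pi {K V ι : Type*} [Field K] [AddCommGroup V] [Module K V]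
    [FiniteDimensional K V] [Fintype ι] {ℓ : ι → Dual K V} (hℓ : LinearIndependent K ℓ)
    (hcard : Fintype.card ι = finrank K V) : Function.Injective (LinearMap.pi ℓ) := by
  rw [← LinearMap.ker_eq_bot, ← Submodule.dualCoannihilator_top,
    ← hℓ.span_eq_top_of_card_eq_finrank' (hcard.trans Subspace.dual_finrank_eq.symm)]
  refine SetLike.coe_injective ?_
  rw [Submodule.coe_dualCoannihilator_span]
  ext x
  simp [funext_iff]

theorem LinearIndependent.det_pi_ne_zero {K ι : Type*} [Field K] [Fintype ι]
    {ℓ : ι → Dual K (ι → K)} (hℓ : LinearIndependent K ℓ) : LinearMap.det (LinearMap.pi ℓ) ≠ 0 :=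
  (LinearMap.isUnit_det _ ((LinearMap.isUnit_iff_ker_eq_bot _).2
    (LinearMap.ker_eq_bot.2 (hℓ.injective_pi (finrank_fintype_fun_eq_card K).symm)))).ne_zero

theorem volume_preimage_Icc_neg_self {ι : Type*} [Fintype ι] {T : (ι → ℝ) →ₗ[ℝ] ι → ℝ}
    (hT : LinearMap.det T ≠ 0) {A : ι → ℝ} (hA : ∀ i, 0 ≤ A i) :
    volume (T ⁻¹' Set.Icc (-A) A) =
      ENNReal.ofReal (2 ^ Fintype.card ι * (∏ i, A i) / |LinearMap.det T|) := by
  rw [Measure.addHaar_preimage_linearMap _ hT, Real.volume_Icc_pi,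
    ← ENNReal.ofReal_prod_of_nonneg (fun i _ => by simp; linarith [hA i]),
    ← ENNReal.ofReal_mul (abs_nonneg _)]
  congr 1
  rw [Finset.prod_congr rfl fun i _ => show A i - (-A) i = 2 * A i by rw [Pi.neg_apply]; ring,
    Finset.prod_mul_distrib, Finset.prod_const, Finset.card_univ, abs_inv]
  ring

theorem AddSubgroup.exists_ne_zero_mem_forall_abs_le {ι : Type*} [Fintype ι]
    {ℓ : ι → Dual ℝ (ι → ℝ)} (hℓ : LinearIndependent ℝ ℓ) (Λ : AddSubgroup (ι → ℤ)) [Λ.FiniteIndex]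
    {A : ι → ℝ}
    (hA : ∀ i, 0 ≤ A i) (h : Λ.index * |LinearMap.det (LinearMap.pi ℓ)| < ∏ i, A i) :
    ∃ x ∈ Λ, x ≠ 0 ∧ ∀ i, |ℓ i (fun j => (x j : ℝ))| ≤ A i := by
  have hdet := hℓ.det_pi_ne_zero
  have hvol : (Λ.index : ℝ) * 2 ^ Fintype.card ι <
      2 ^ Fintype.card ι * (∏ i, A i) / |LinearMap.det (LinearMap.pi ℓ)| := by
    rw [mul_comm, mul_div_assoc]
    exact mul_lt_mul_of_pos_left ((lt_div_iff₀ (abs_pos.2 hdet)).2 h) (by positivity)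
  obtain ⟨x, hxΛ, hx0, hxA⟩ := Λ.exists_ne_zero_mem_of_index_mul_two_pow_lt_volume
    (s := LinearMap.pi ℓ ⁻¹' Set.Icc (-A) A)
    (fun y hy => ⟨by simpa using neg_le_neg hy.2, by simpa [neg_le] using hy.1⟩)
    ((convex_Icc _ _).linear_preimage _) (by
      rw [volume_preimage_Icc_neg_self hdet hA]
      refine lt_of_eq_of_lt ?_ ((ENNReal.ofReal_lt_ofReal_iff_of_nonneg (by positivity)).2 hvol)
      rw [ENNReal.ofReal_mul (by positivity), ENNReal.ofReal_natCast,
        ENNReal.ofReal_pow zero_le_two, ENNReal.ofReal_ofNat])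
  exact ⟨x, hxΛ, hx0, fun i => abs_le.2 ⟨hxA.1 i, hxA.2 i⟩⟩

section Padic

variable {p : ℕ} [Fact p.Prime] {G : Type*} [AddGroup G]

theorem PadicInt.exists_finiteIndex_index_le_forall_norm_le (ψ : G →+ ℤ_[p]) (k : ℕ) :
    ∃ Λ : AddSubgroup G, Λ.FiniteIndex ∧ Λ.index ≤ p ^ k ∧ ∀ g ∈ Λ, ‖ψ g‖ ≤ p ^ (-k : ℤ) := by
  let φ := (toZModPow k : ℤ_[p] →+* ZMod (p ^ k)).toAddMonoidHom.comp ψ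
  refine ⟨φ.ker, inferInstance, ?_, fun g hg => ?_⟩
  · rw [AddSubgroup.index_ker]
    exact (Nat.card_le_card_of_injective _ Subtype.val_injective).trans (Nat.card_zmod _).le
  · rw [norm_le_pow_iff_mem_span_pow, ← ker_toZModPow]
    exact hg

theorem Padic.exists_finiteIndex_index_le_forall_pow_mul_norm_le (ψ : G →+ ℚ_[p]) {n : ℕ}
    (hψ : ∀ g, ‖ψ g‖ ≤ p ^ n) (k : ℕ) :
    ∃ Λ : AddSubgroup G, Λ.FiniteIndex ∧ Λ.index ≤ p ^ k ∧ ∀ g ∈ Λ, p ^ k * ‖ψ g‖ ≤ p ^ n := by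
  have hp : (0 : ℝ) < p := by exact_mod_cast (Fact.out : p.Prime).pos
  have hnorm (g : G) : ‖(p : ℚ_[p]) ^ n * ψ g‖ = ‖ψ g‖ / p ^ n := by
    rw [norm_mul, norm_p_pow, zpow_neg, zpow_natCast, inv_mul_eq_div]
  let ψ' : G →+ ℤ_[p] := AddMonoidHom.mk' (fun g => ⟨p ^ n * ψ g, by
      rw [hnorm, div_le_one (pow_pos hp n)]; exact hψ g⟩)
    fun g h => Subtype.ext (show (p : ℚ_[p]) ^ n * ψ (g + h) = p ^ n * ψ g + p ^ n * ψ h by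
      rw [map_add, mul_add])
  obtain ⟨Λ, hΛ, hindex, hΛψ⟩ := PadicInt.exists_finiteIndex_index_le_forall_norm_le ψ' k
  refine ⟨Λ, hΛ, hindex, fun g hg => ?_⟩
  have := hΛψ g hg
  rw [PadicInt.norm_def] at this
  change ‖(p : ℚ_[p]) ^ n * ψ g‖ ≤ _ at this
  rwa [hnorm, zpow_neg, zpow_natCast, div_le_iff₀ (pow_pos hp n), inv_mul_eq_div,
    le_div_iff₀' (pow_pos hp k)] at this

variable {ι : Type*} [Fintype ι]

theorem LinearMap.exists_forall_norm_apply_intCast_le_pow (ℓ : (ι → ℚ_[p]) →ₗ[ℚ_[p]] ℚ_[p]) :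
    ∃ n : ℕ, ∀ x : ι → ℤ, ‖ℓ (fun j => (x j : ℚ_[p]))‖ ≤ p ^ n := by
  classical
  obtain ⟨n, hn⟩ := pow_unbounded_of_one_lt (∑ j, ‖ℓ (fun k => if j = k then 1 else 0)‖)
    (Nat.one_lt_cast.2 (Fact.out : p.Prime).one_lt)
  refine ⟨n, fun x => ?_⟩
  rw [LinearMap.pi_apply_eq_sum_univ]
  refine (IsUltrametricDist.norm_sum_le_of_forall_le_of_nonneg (by positivity) fun j _ => ?_).trans
    hn.le
  rw [norm_smul]
  exact (mul_le_of_le_one_left (norm_nonneg _) (Padic.norm_int_le_one _)).trans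
    (Finset.single_le_sum (f := fun j => ‖ℓ (fun k => if j = k then 1 else 0)‖)
      (fun j _ => norm_nonneg _) (Finset.mem_univ j))

theorem LinearMap.exists_forall_index_le_div_forall_norm_le (ℓ : (ι → ℚ_[p]) →ₗ[ℚ_[p]] ℚ_[p]) :
    ∃ c : ℝ, 0 < c ∧ ∀ B : ℝ, 0 < B → B ≤ 1 → ∃ Λ : AddSubgroup (ι → ℤ), Λ.FiniteIndex ∧
      (Λ.index : ℝ) ≤ c / B ∧ ∀ x ∈ Λ, ‖ℓ (fun j => (x j : ℚ_[p]))‖ ≤ B := by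
  have hp : (1 : ℝ) < p := Nat.one_lt_cast.2 (Fact.out : p.Prime).one_lt
  obtain ⟨n, hn⟩ := ℓ.exists_forall_norm_apply_intCast_le_pow
  refine ⟨p ^ (n + 1), by positivity, fun B hB hB1 => ?_⟩
  obtain ⟨k, hk, hk'⟩ := exists_nat_pow_near
    ((one_le_div hB).2 (hB1.trans (one_le_pow₀ hp.le))) hp
  obtain ⟨Λ, hΛ, hindex, hΛℓ⟩ := Padic.exists_finiteIndex_index_le_forall_pow_mul_norm_le
    (ℓ.toAddMonoidHom.comp ((Int.castAddHom ℚ_[p]).compLeft ι)) hn (k + 1)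
  refine ⟨Λ, hΛ, ?_, fun x hx => ?_⟩
  · calc (Λ.index : ℝ) ≤ p ^ (k + 1) := by exact_mod_cast hindex
      _ = p * p ^ k := pow_succ' _ _
      _ ≤ p * (p ^ n / B) := by gcongr
      _ = p ^ (n + 1) / B := by ring
  · rw [div_lt_iff₀ hB] at hk'
    exact (lt_of_mul_lt_mul_left ((hΛℓ x hx).trans_lt hk') (by positivity)).le

end Padic

theorem padic_minkowski_general (p : ℕ) [Fact p.Prime] (m m' : ℕ)
    (ℓ : Fin m → ((Fin m → ℝ) →ₗ[ℝ] ℝ)) (hℓ : LinearIndependent ℝ ℓ)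
    (ℓp : Fin m' → ((Fin m → ℚ_[p]) →ₗ[ℚ_[p]] ℚ_[p])) :
    ∃ γ₁ γ₂ : ℝ, 1 < γ₁ ∧ 1 < γ₂ ∧
      ∀ (A : Fin m → ℝ) (B : Fin m' → ℝ), (∀ i, 0 < A i) → (∀ i, 0 < B i) →
        γ₁ ≤ (∏ i, A i) * ∏ i, B i → (∀ i, B i ≤ γ₂⁻¹) →
        ∃ x : Fin m → ℤ, x ≠ 0 ∧
          (∀ i, |ℓ i (fun j => (x j : ℝ))| ≤ A i) ∧
          (∀ i, ‖ℓp i (fun j => (x j : ℚ_[p]))‖ ≤ B i) := by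
  choose c hc0 hc using fun i => (ℓp i).exists_forall_index_le_div_forall_norm_le
  set D := |LinearMap.det (LinearMap.pi ℓ)|
  have hD : 0 < D := abs_pos.2 hℓ.det_pi_ne_zero
  have hcpos : 0 < ∏ i, c i := Finset.prod_pos fun i _ => hc0 i
  refine ⟨(∏ i, c i) * D + 1, 2, by nlinarith, one_lt_two, fun A B hA hB hAB hB2 => ?_⟩
  choose Λ hΛ hindex hΛℓ using fun i => hc i (B i) (hB i) ((hB2 i).trans (by norm_num))
  have := AddSubgroup.finiteIndex_iInf hΛ
  have hindex : ((⨅ i, Λ i).index : ℝ) ≤ (∏ i, c i) / ∏ i, B i := by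
    rw [← Finset.prod_div_distrib]
    exact (Nat.cast_le.2 (AddSubgroup.index_iInf_le Λ)).trans (by
      push_cast; exact Finset.prod_le_prod (fun i _ => by positivity) fun i _ => hindex i)
  obtain ⟨x, hxΛ, hx0, hxA⟩ :=
    (⨅ i, Λ i).exists_ne_zero_mem_forall_abs_le hℓ (fun i => (hA i).le) <|
    calc ((⨅ i, Λ i).index : ℝ) * D ≤ (∏ i, c i) / (∏ i, B i) * D := by gcongr
      _ < ∏ i, A i := by
        rw [div_mul_eq_mul_div, div_lt_iff₀ (Finset.prod_pos fun i _ => hB i)]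
        linarith
  exact ⟨x, hx0, hxA, fun i => hΛℓ i x (AddSubgroup.mem_iInf.1 hxΛ i)⟩

/-- "p-adic Minkowski": given linearly independent real linear forms
`ℓ₁,…,ℓ_m` and linearly independent `p`-adic linear forms `ℓ_{1,p},…,ℓ_{m',p}` in `m`
variables, there are `γ₁, γ₂ > 1` such that whenever positive reals `A_i`, `B_i` satisfy
`A₁⋯A_m·B₁⋯B_{m'} ≥ γ₁` and `B_i ≤ γ₂⁻¹`, there is a nonzero `x ∈ ℤ^m` with
`|ℓ_i(x)| ≤ A_i` and `|ℓ_{i,p}(x)|_p ≤ B_i`. -/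
theorem padic_minkowski (p : ℕ) [Fact p.Prime] (m m' : ℕ) (hm : 0 < m) (hm' : m' ≤ m)
    (ℓ : Fin m → ((Fin m → ℝ) →ₗ[ℝ] ℝ)) (hℓ : LinearIndependent ℝ ℓ)
    (ℓp : Fin m' → ((Fin m → ℚ_[p]) →ₗ[ℚ_[p]] ℚ_[p]))
    (hℓp : LinearIndependent ℚ_[p] ℓp) :
    ∃ γ₁ γ₂ : ℝ, 1 < γ₁ ∧ 1 < γ₂ ∧
      ∀ (A : Fin m → ℝ) (B : Fin m' → ℝ), (∀ i, 0 < A i) → (∀ i, 0 < B i) →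
        γ₁ ≤ (∏ i, A i) * ∏ i, B i → (∀ i, B i ≤ γ₂⁻¹) →
        ∃ x : Fin m → ℤ, x ≠ 0 ∧
          (∀ i, |ℓ i (fun j => (x j : ℝ))| ≤ A i) ∧
          (∀ i, ‖ℓp i (fun j => (x j : ℚ_[p]))‖ ≤ B i) :=
  padic_minkowski_general p m m' ℓ hℓ ℓp
end

section
/- Let F(X,Y) ∈ ℤ[X,Y] be a binary form of degree n that splits over ℚ as F = a·∏_{i=1}^n (X − β_i Y) with a ∈ ℤ, β_i ∈ ℚ distinct. Let p, q be distinct primes such that |a|_p = |a|_q = 1, |β_i|_p ≤ 1, |β_i|_q ≤ 1 for all i, and |β_i − β_j|_p = |β_i − β_j|_q = 1 for all i ≠ j. Then for all positive integers k, l there exist coprime integers x, y with F(x,y) ≠ 0 and [F(x,y)]_{{p,q}} = p^k q^l. -/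
/-!
Pick two roots `β₀ ≠ β₁` and an integer `u`, prime to `p` and `q`, that clears the denominators
of `β₀ / (β₁ - β₀)` and `1 / (β₁ - β₀)`. Then `X - β₀ Y = u pᵏ`, `X - β₁ Y = u qˡ` has an integer
solution with `Y = u (pᵏ - qˡ) / (β₁ - β₀)` prime to `p` and `q`. Since the roots are pairwise
incongruent modulo `p`, the ultrametric inequality makes every factor `X - βᵢ Y` with `βᵢ ≠ β₀`
a `p`-adic unit, so `|F(X, Y)|_p = |pᵏ|_p`; likewise `|F(X, Y)|_q = |qˡ|_q`. Dividing `X` and `Y`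
by their gcd, which divides `Y`, changes `F(X, Y)` by a unit at `p` and at `q`.
-/

/-- The `S`-part of a nonzero integer `m`. -/
def Spart (S : Finset ℕ) (m : ℤ) : ℕ :=
  ∏ p ∈ S, p ^ (m.natAbs.factorization p)

namespace padicNorm

variable {p : ℕ} [Fact p.Prime]

lemma add_eq_of_lt {x y : ℚ} (h : padicNorm p x < padicNorm p y) :
    padicNorm p (x + y) = padicNorm p y := by
  rw [add_eq_max_of_ne h.ne, max_eq_right h.le]

lemma den_eq_one_of_le_one {r : ℚ} (h : padicNorm p r ≤ 1) : padicNorm p r.den = 1 := by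
  rw [nat_eq_one_iff]
  intro hden
  have hnum : padicNorm p r.num = 1 := by
    rw [int_eq_one_iff, Int.natCast_dvd]
    exact fun hnum => (Fact.out : p.Prime).not_dvd_one
      ((Nat.dvd_gcd hnum hden).trans r.reduced.dvd)
  have hden_lt : padicNorm p r.den < 1 := (nat_lt_one_iff _).2 hden
  have hr := congrArg (padicNorm p) (Rat.mul_den_eq_num r)
  rw [padicNorm.mul, hnum] at hr
  linarith [mul_le_of_le_one_left (padicNorm.nonneg (p := p) (r.den : ℚ)) h]

protected lemma prod {ι : Type*} (s : Finset ι) (f : ι → ℚ) :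
    padicNorm p (∏ i ∈ s, f i) = ∏ i ∈ s, padicNorm p (f i) :=
  map_prod (IsAbsoluteValue.toAbsoluteValue (padicNorm p)) f s

lemma sub_mul_eq_one {x y β₀ β : ℚ} (hy : padicNorm p y = 1) (hβ : padicNorm p (β₀ - β) = 1)
    (h₀ : padicNorm p (x - β₀ * y) < 1) : padicNorm p (x - β * y) = 1 := by
  have hβy : padicNorm p ((β₀ - β) * y) = 1 := by rw [padicNorm.mul, hβ, hy, one_mul]
  rw [show x - β * y = (x - β₀ * y) + (β₀ - β) * y by ring, add_eq_of_lt (h₀.trans_eq hβy.symm),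
    hβy]

lemma prod_sub_mul_eq {ι : Type*} [Fintype ι] {β : ι → ℚ}
    (hβ : ∀ i j, i ≠ j → padicNorm p (β i - β j) = 1) {x y : ℚ} {i₀ : ι}
    (hy : padicNorm p y = 1) (h₀ : padicNorm p (x - β i₀ * y) < 1) :
    padicNorm p (∏ i, (x - β i * y)) = padicNorm p (x - β i₀ * y) := by
  rw [padicNorm.prod, Finset.prod_eq_single i₀]
  · exact fun i _ hi => sub_mul_eq_one hy (hβ i₀ i (Ne.symm hi)) h₀
  · simp

lemma int_ne_zero_of_eq_pow {m : ℤ} {k : ℕ} (h : padicNorm p m = padicNorm p ((p : ℚ) ^ k)) :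
    m ≠ 0 := by
  rintro rfl
  rw [Int.cast_zero, padicNorm.zero] at h
  exact padicNorm.nonzero (pow_ne_zero k (Nat.cast_ne_zero.2 (Fact.out : p.Prime).ne_zero)) h.symm

lemma factorization_natAbs_eq {m : ℤ} {k : ℕ} (h : padicNorm p m = padicNorm p ((p : ℚ) ^ k)) :
    m.natAbs.factorization p = k := by
  have hp : p.Prime := Fact.out
  have hpk : ((p : ℚ) ^ k) ≠ 0 := pow_ne_zero _ (by exact_mod_cast hp.ne_zero)
  have hm : (m : ℚ) ≠ 0 := Int.cast_ne_zero.2 (int_ne_zero_of_eq_pow h)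
  rw [padicNorm.eq_zpow_of_nonzero hm, padicNorm.eq_zpow_of_nonzero hpk] at h
  simp only [padicValRat.pow, padicValRat.self hp.one_lt, padicValRat.of_int, mul_one] at h
  have := zpow_right_injective₀ (by exact_mod_cast hp.pos) (by exact_mod_cast hp.one_lt.ne') h
  rw [Nat.factorization_def _ hp]
  simp only [padicValInt, neg_inj] at this
  omega

end padicNorm

lemma Spart_pair_eq {p q : ℕ} [Fact p.Prime] [Fact q.Prime] (hpq : p ≠ q) {m : ℤ} {k l : ℕ}
    (hmp : padicNorm p m = padicNorm p ((p : ℚ) ^ k))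
    (hmq : padicNorm q m = padicNorm q ((q : ℚ) ^ l)) : Spart {p, q} m = p ^ k * q ^ l := by
  rw [Spart, Finset.prod_pair hpq, padicNorm.factorization_natAbs_eq hmp,
    padicNorm.factorization_natAbs_eq hmq]

lemma Int.not_natCast_dvd_pow_sub {p q : ℕ} (hp : p.Prime) (hq : q.Prime) (hpq : p ≠ q) {k : ℕ}
    (hk : 0 < k) (l : ℕ) : ¬ (p : ℤ) ∣ (p : ℤ) ^ k - (q : ℤ) ^ l := by
  rw [dvd_sub_right (dvd_pow_self _ hk.ne')]
  intro h
  exact hpq ((Nat.prime_dvd_prime_iff_eq hp hq).1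
    (Int.natCast_dvd_natCast.1 ((Nat.prime_iff_prime_int.1 hp).dvd_of_dvd_pow h)))

lemma exists_int_sub_mul_eq {β₀ β₁ : ℚ} (hβ : β₀ ≠ β₁) (s t : ℤ) :
    ∃ u X Y : ℤ, (X : ℚ) - β₀ * Y = u * s ∧ (X : ℚ) - β₁ * Y = u * t ∧
      ∀ (p : ℕ) [Fact p.Prime], padicNorm p β₀ ≤ 1 → padicNorm p (β₁ - β₀) = 1 →
        ¬ (p : ℤ) ∣ s - t → ¬ (p : ℤ) ∣ u ∧ ¬ (p : ℤ) ∣ Y := by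
  set c := (β₁ - β₀)⁻¹
  have hc : (β₁ - β₀) * c = 1 := mul_inv_cancel₀ (sub_ne_zero.2 hβ.symm)
  set u : ℤ := c.den * (β₀ * c).den
  obtain ⟨Y, hY⟩ : ∃ Y : ℤ, (Y : ℚ) = u * c * (s - t) :=
    ⟨c.num * (β₀ * c).den * (s - t), by push_cast [u]; rw [← Rat.mul_den_eq_num]; ring⟩
  obtain ⟨X, hX⟩ : ∃ X : ℤ, (X : ℚ) = β₀ * Y + u * s :=
    ⟨(β₀ * c).num * c.den * (s - t) + u * s, by push_cast [u, hY]; rw [← Rat.mul_den_eq_num]; ring⟩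
  refine ⟨u, X, Y, by rw [hX]; ring,
    by rw [hX, hY]; linear_combination (-(u * (s - t) : ℚ)) * hc, ?_⟩
  intro p _ hβ₀ hd hst
  have hcp : padicNorm p c = 1 := by rw [IsAbsoluteValue.abv_inv (padicNorm p), hd, inv_one]
  have hup : padicNorm p u = 1 := by
    push_cast [u]
    rw [padicNorm.mul, padicNorm.den_eq_one_of_le_one hcp.le, padicNorm.den_eq_one_of_le_one
      (by rwa [padicNorm.mul, hcp, mul_one]), one_mul]
  have hYp : padicNorm p Y = 1 := by
    rw [hY, padicNorm.mul, padicNorm.mul, hup, hcp, ← Int.cast_sub,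
      (padicNorm.int_eq_one_iff _).2 hst]
    norm_num
  exact ⟨(padicNorm.int_eq_one_iff u).1 hup, (padicNorm.int_eq_one_iff Y).1 hYp⟩

section SplitForm

variable {n : ℕ} {F : MvPolynomial (Fin 2) ℤ} {a : ℤ} {β : Fin n → ℚ}

lemma eval_eq_of_split
    (hsplit : ∀ x y : ℚ, (MvPolynomial.aeval ![x, y]) F = (a : ℚ) * ∏ i, (x - β i * y))
    (x y : ℤ) : ((MvPolynomial.eval ![x, y] F : ℤ) : ℚ) = a * ∏ i, ((x : ℚ) - β i * y) := by
  have hv : ![(x : ℚ), y] = algebraMap ℤ ℚ ∘ ![x, y] := by ext i; fin_cases i <;> rfl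
  rw [← hsplit, hv, MvPolynomial.aeval_algebraMap_apply]
  rfl

lemma padicNorm_eval_eq {p : ℕ} [Fact p.Prime]
    (hsplit : ∀ x y : ℚ, (MvPolynomial.aeval ![x, y]) F = (a : ℚ) * ∏ i, (x - β i * y))
    (hap : padicNorm p (a : ℚ) = 1) (hd : ∀ i j, i ≠ j → padicNorm p (β i - β j) = 1)
    {x y g u : ℤ} {s : ℚ} {i₀ : Fin n} (hs : padicNorm p s < 1) (hu : ¬ (p : ℤ) ∣ u)
    (hyg : ¬ (p : ℤ) ∣ y * g) (h : ((x * g : ℤ) : ℚ) - β i₀ * ((y * g : ℤ) : ℚ) = u * s) :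
    padicNorm p (MvPolynomial.eval ![x, y] F : ℚ) = padicNorm p s := by
  have hg : padicNorm p g = 1 :=
    (padicNorm.int_eq_one_iff g).2 fun h => hyg (dvd_mul_of_dvd_right h y)
  have hy : padicNorm p y = 1 :=
    (padicNorm.int_eq_one_iff y).2 fun h => hyg (dvd_mul_of_dvd_left h g)
  have h₀ : padicNorm p ((x : ℚ) - β i₀ * y) = padicNorm p s := by
    have := congrArg (padicNorm p) h
    rwa [show ((x * g : ℤ) : ℚ) - β i₀ * ((y * g : ℤ) : ℚ) = (x - β i₀ * y) * g by push_cast; ring,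
      padicNorm.mul, padicNorm.mul, hg, (padicNorm.int_eq_one_iff u).2 hu, mul_one, one_mul] at this
  rw [eval_eq_of_split hsplit, padicNorm.mul, hap, one_mul,
    padicNorm.prod_sub_mul_eq hd hy (h₀ ▸ hs), h₀]

end SplitForm

/-- let `F ∈ ℤ[X,Y]` split over `ℚ` as `a·∏(X − βᵢY)` with distinct rational
`βᵢ`, and let `p ≠ q` be primes with `|a|_p = |a|_q = 1`, `|βᵢ|_p, |βᵢ|_q ≤ 1` and
`|βᵢ − βⱼ|_p = |βᵢ − βⱼ|_q = 1` for `i ≠ j`. Then for all `k, l ≥ 1` there are coprime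
integers `x, y` with `F(x,y) ≠ 0` and `[F(x,y)]_{{p,q}} = p^k q^l`. -/
theorem Spart_split_form_attains (n : ℕ) (hn : 2 ≤ n) (F : MvPolynomial (Fin 2) ℤ)
    (a : ℤ) (β : Fin n → ℚ) (hβ : Function.Injective β)
    (hsplit : ∀ x y : ℚ,
      (MvPolynomial.aeval ![x, y]) F = (a : ℚ) * ∏ i, (x - β i * y))
    (p q : ℕ) (hp : p.Prime) (hq : q.Prime) (hpq : p ≠ q)
    (hap : padicNorm p (a : ℚ) = 1) (haq : padicNorm q (a : ℚ) = 1)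
    (hβp : ∀ i, padicNorm p (β i) ≤ 1) (hβq : ∀ i, padicNorm q (β i) ≤ 1)
    (hdp : ∀ i j, i ≠ j → padicNorm p (β i - β j) = 1)
    (hdq : ∀ i j, i ≠ j → padicNorm q (β i - β j) = 1) :
    ∀ k l : ℕ, 0 < k → 0 < l → ∃ x y : ℤ, IsCoprime x y ∧
      MvPolynomial.eval ![x, y] F ≠ 0 ∧
      Spart {p, q} (MvPolynomial.eval ![x, y] F) = p ^ k * q ^ l := by
  intro k l hk hl
  have := Fact.mk hp
  have := Fact.mk hq
  obtain ⟨i₀, i₁, hi⟩ : ∃ i₀ i₁ : Fin n, i₀ ≠ i₁ :=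
    ⟨⟨0, by omega⟩, ⟨1, by omega⟩, by simp [Fin.ext_iff]⟩
  obtain ⟨u, X, Y, h₀, h₁, hunit⟩ := exists_int_sub_mul_eq (hβ.ne hi) ((p : ℤ) ^ k) ((q : ℤ) ^ l)
  obtain ⟨hup, hYp⟩ := hunit p (hβp i₀) (hdp i₁ i₀ hi.symm)
    (Int.not_natCast_dvd_pow_sub hp hq hpq hk l)
  obtain ⟨huq, hYq⟩ := hunit q (hβq i₀) (hdq i₁ i₀ hi.symm)
    (by rw [dvd_sub_comm]; exact Int.not_natCast_dvd_pow_sub hq hp hpq.symm hl k)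
  have hY : Y ≠ 0 := by rintro rfl; exact hYp (dvd_zero _)
  obtain ⟨g, x, y, -, hxy, rfl, rfl⟩ := Int.exists_gcd_one' (Int.gcd_pos_of_ne_zero_right X hY)
  have hFp := padicNorm_eval_eq hsplit hap hdp (s := (p : ℚ) ^ k)
    (by exact_mod_cast (padicNorm.nat_lt_one_iff _).2 (dvd_pow_self p hk.ne')) hup hYp
    (by exact_mod_cast h₀)
  have hFq := padicNorm_eval_eq hsplit haq hdq (s := (q : ℚ) ^ l)
    (by exact_mod_cast (padicNorm.nat_lt_one_iff _).2 (dvd_pow_self q hl.ne')) huq hYq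
    (by exact_mod_cast h₁)
  exact ⟨x, y, Int.isCoprime_iff_gcd_eq_one.2 hxy, padicNorm.int_ne_zero_of_eq_pow hFp,
    Spart_pair_eq hpq hFp hFq⟩
end
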